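/- Consider one inner loop of SARAH (SARAH-IN) with each f_i L-smooth and learning rate η satisfying 0 < η ≤ 2 / ( L ( sqrt(1 + (4m/b)·((n−b)/(n−1))) + 1 ) ). Then Σ_{t=0}^{m} E[||∇P(w_t) − v_t||²] − (1 − Lη) Σ_{t=0}^{m} E[||v_t||²] ≤ 0. -/

import Mathlib

open scoped BigOperators

noncomputable section

/-- Vectors in `ℝ^d`. -/
abbrev Vec (d : ℕ) := EuclideanSpace ℝ (Fin d)

/-- The type of mini-batches of size `b` from `{1,…,n}` (modeled as `Fin n`). -/
def Batch (n b : ℕ) : Type := {s : Finset (Fin n) // s.card = b}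

instance (n b : ℕ) : Fintype (Batch n b) :=
  inferInstanceAs (Fintype {s : Finset (Fin n) // s.card = b})

/-- Expectation (uniform average) over a finite sample space. -/
def expec {Ω : Type*} [Fintype Ω] (F : Ω → ℝ) : ℝ :=
  (Fintype.card Ω : ℝ)⁻¹ * ∑ ω, F ω

/-- The SARAH-IN state `(w_t, v_t)` given a starting point `w0`, a learning rate `η`,
a batch size `b` and a sequence of mini-batches `I` (where `I t` is the batch used to
form `v_t`, for `t ≥ 1`). -/
def sarahState {d n : ℕ} (f : Fin n → Vec d → ℝ) (w0 : Vec d) (η : ℝ) (b : ℕ)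
    (I : ℕ → Finset (Fin n)) : ℕ → Vec d × Vec d
  | 0 => (w0, (n : ℝ)⁻¹ • ∑ i, gradient (f i) w0)
  | t + 1 =>
    let p := sarahState f w0 η b I t
    let w' := p.1 - η • p.2
    (w', (b : ℝ)⁻¹ • ∑ i ∈ I (t + 1), (gradient (f i) w' - gradient (f i) p.1) + p.2)

/-- Extend a finite sequence of mini-batches to all of `ℕ` (indices `≥ T` are irrelevant). -/
def pad {n b T : ℕ} (ω : Fin T → Batch n b) : ℕ → Finset (Fin n) :=
  fun t => if h : t < T then (ω ⟨t, h⟩).1 else ∅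

/-!
Write `κ = (n - b) / (b (n - 1))`. Averaged over a uniformly random `b`-subset, the SARAH
estimator `v_{t+1}` is an unbiased estimate of `∇P(w_{t+1}) - ∇P(w_t) + v_t`, and the variance of a
mean sampled without replacement is `κ` times the population variance. Since the increments
`∇f_i(w_{t+1}) - ∇f_i(w_t)` have norm at most `Lη‖v_t‖`, this gives
`E‖∇P(w_{t+1}) - v_{t+1}‖² ≤ E‖∇P(w_t) - v_t‖² + κL²η² E‖v_t‖²`, while `v_0 = ∇P(w_0)` exactly.
Summing, the error terms are at most `mκL²η² ∑_t E‖v_t‖²`, and the learning-rate condition is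
precisely `mκ(Lη)² ≤ 1 - Lη`.
-/

open Finset
open scoped RealInnerProductSpace

section Sampling

variable {α E : Type*} [Fintype α] [DecidableEq α] [NormedAddCommGroup E]
  [InnerProductSpace ℝ E] {b : ℕ}

lemma card_filter_powersetCard_univ_superset_congr {s t : Finset α} (h : #s = #t) :
    #{x ∈ powersetCard b (univ : Finset α) | s ⊆ x}
      = #{x ∈ powersetCard b (univ : Finset α) | t ⊆ x} := by
  rcases le_or_gt #s b with hs | hs
  · rw [card_filter_powersetCard_subset s univ b (subset_univ s) hs,
      card_filter_powersetCard_subset t univ b (subset_univ t) (h ▸ hs), h]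
  · have no_superset :
        ∀ u : Finset α, b < #u → {x ∈ powersetCard b (univ : Finset α) | u ⊆ x} = ∅ :=
      fun u hu => filter_false_of_mem fun x hx hux =>
        (card_le_card hux).not_gt ((mem_powersetCard_univ.1 hx).symm ▸ hu)
    rw [no_superset s hs, no_superset t (h ▸ hs)]

lemma card_filter_powersetCard_univ_superset_mul_choose (s : Finset α) :
    #{x ∈ powersetCard b (univ : Finset α) | s ⊆ x} * (Fintype.card α).choose #s
      = (Fintype.card α).choose b * b.choose #s := by
  have double_count := sum_card_bipartiteAbove_eq_sum_card_bipartiteBelow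
    (fun x t : Finset α => t ⊆ x) (s := powersetCard b (univ : Finset α))
    (t := powersetCard #s (univ : Finset α))
  have above : ∀ x ∈ powersetCard b (univ : Finset α),
      #((powersetCard #s (univ : Finset α)).bipartiteAbove (fun x t : Finset α => t ⊆ x) x)
        = b.choose #s := by
    intro x hx
    rw [← mem_powersetCard_univ.1 hx, ← card_powersetCard]
    congr 1
    ext t
    simp [bipartiteAbove, mem_powersetCard, and_comm]
  have below : ∀ t ∈ powersetCard #s (univ : Finset α),
      #((powersetCard b (univ : Finset α)).bipartiteBelow (fun x t : Finset α => t ⊆ x) t)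
        = #{x ∈ powersetCard b (univ : Finset α) | s ⊆ x} :=
    fun t ht => card_filter_powersetCard_univ_superset_congr (mem_powersetCard_univ.1 ht)
  rw [sum_congr rfl above, sum_congr rfl below, sum_const, sum_const, card_powersetCard,
    card_powersetCard, card_univ, smul_eq_mul, smul_eq_mul] at double_count
  rw [mul_comm, ← double_count]

lemma card_filter_powersetCard_univ_mem_mul (i : α) :
    (#{x ∈ powersetCard b (univ : Finset α) | i ∈ x} : ℝ) * Fintype.card α
      = #(powersetCard b (univ : Finset α)) * b := by
  have h := card_filter_powersetCard_univ_superset_mul_choose (b := b) {i}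
  simp only [singleton_subset_iff, card_singleton, Nat.choose_one_right] at h
  rw [card_powersetCard, card_univ]
  exact_mod_cast h

lemma card_filter_powersetCard_univ_mem_mem_mul {i j : α} (hij : i ≠ j) :
    (#{x ∈ powersetCard b (univ : Finset α) | i ∈ x ∧ j ∈ x} : ℝ)
        * (Fintype.card α * (Fintype.card α - 1))
      = #(powersetCard b (univ : Finset α)) * (b * (b - 1)) := by
  have h := congrArg (Nat.cast : ℕ → ℝ) (card_filter_powersetCard_univ_superset_mul_choose
    (b := b) {i, j})
  simp only [insert_subset_iff, singleton_subset_iff, card_pair hij] at h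
  push_cast [Nat.cast_choose_two] at h
  rw [card_powersetCard, card_univ]
  linarith

lemma sum_powersetCard_univ_sum [Nonempty α] (a : α → E) :
    ∑ x ∈ powersetCard b (univ : Finset α), ∑ i ∈ x, a i
      = ((#(powersetCard b (univ : Finset α)) : ℝ) * b / Fintype.card α) • ∑ i, a i := by
  rw [sum_comm' (t' := univ) (s' := fun i => {x ∈ powersetCard b (univ : Finset α) | i ∈ x})
    (fun x i => by simp [and_comm]), smul_sum]
  refine sum_congr rfl fun i _ => ?_
  rw [sum_const, ← Nat.cast_smul_eq_nsmul ℝ, ← card_filter_powersetCard_univ_mem_mul i,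
    mul_div_cancel_right₀ _ (by positivity)]

lemma sum_powersetCard_univ_norm_sum_sq (hn : 2 ≤ Fintype.card α) (a : α → E) :
    ∑ x ∈ powersetCard b (univ : Finset α), ‖∑ i ∈ x, a i‖ ^ 2
      = #(powersetCard b (univ : Finset α)) *
          (b * (b - 1) / (Fintype.card α * (Fintype.card α - 1)) * ‖∑ i, a i‖ ^ 2
            + b * (Fintype.card α - b) / (Fintype.card α * (Fintype.card α - 1))
              * ∑ i, ‖a i‖ ^ 2) := by
  have hn0 : (Fintype.card α : ℝ) ≠ 0 := by positivity
  have hn1 : (Fintype.card α : ℝ) - 1 ≠ 0 := by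
    rw [sub_ne_zero]; exact_mod_cast (by omega : Fintype.card α ≠ 1)
  have pair_count : ∀ i j : α, (#{x ∈ powersetCard b (univ : Finset α) | i ∈ x ∧ j ∈ x} : ℝ)
      = #(powersetCard b (univ : Finset α)) *
          (b * (b - 1) / (Fintype.card α * (Fintype.card α - 1))
            + if i = j then
                (b * (Fintype.card α - b) / (Fintype.card α * (Fintype.card α - 1)) : ℝ)
              else 0) := by
    intro i j
    rcases eq_or_ne i j with rfl | hij
    · have h := card_filter_powersetCard_univ_mem_mul (b := b) i
      simp only [and_self, if_true]
      field_simp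
      linear_combination (Fintype.card α - 1 : ℝ) * h
    · have h := card_filter_powersetCard_univ_mem_mem_mul (b := b) hij
      simp only [hij, if_false]
      field_simp
      linear_combination h
  calc ∑ x ∈ powersetCard b (univ : Finset α), ‖∑ i ∈ x, a i‖ ^ 2
      = ∑ x ∈ powersetCard b (univ : Finset α), ∑ p ∈ x ×ˢ x, ⟪a p.1, a p.2⟫ := by
        simp_rw [← real_inner_self_eq_norm_sq, sum_inner, inner_sum, sum_product]
    _ = ∑ p : α × α,
          #{x ∈ powersetCard b (univ : Finset α) | p.1 ∈ x ∧ p.2 ∈ x} * ⟪a p.1, a p.2⟫ := by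
        rw [sum_comm' (t' := univ)
          (s' := fun p => {x ∈ powersetCard b (univ : Finset α) | p.1 ∈ x ∧ p.2 ∈ x})
          (fun x p => by simp [and_comm])]
        simp_rw [sum_const, nsmul_eq_mul]
    _ = _ := by
        have sq_sum : ‖∑ i, a i‖ ^ 2 = ∑ i, ∑ j, ⟪a i, a j⟫ := by
          simp_rw [← real_inner_self_eq_norm_sq, sum_inner, inner_sum]
        have sum_sq : ∑ i, ‖a i‖ ^ 2 = ∑ i, ∑ j, if i = j then ⟪a i, a j⟫ else 0 := by
          simp_rw [sum_ite_eq, if_pos (mem_univ _), real_inner_self_eq_norm_sq]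
        rw [sq_sum, sum_sq, Fintype.sum_prod_type, mul_sum, mul_sum, ← sum_add_distrib, mul_sum]
        refine sum_congr rfl fun i _ => ?_
        rw [mul_sum, mul_sum, ← sum_add_distrib, mul_sum]
        refine sum_congr rfl fun j _ => ?_
        rw [pair_count]
        split_ifs <;> ring

lemma average_powersetCard_univ_norm_add_sub_sq (hn : 2 ≤ Fintype.card α) (hb : 1 ≤ b)
    (hbn : b ≤ Fintype.card α) (X : E) (a : α → E) :
    (#(powersetCard b (univ : Finset α)) : ℝ)⁻¹ * ∑ x ∈ powersetCard b (univ : Finset α),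
        ‖X + ((Fintype.card α : ℝ)⁻¹ • ∑ i, a i - (b : ℝ)⁻¹ • ∑ i ∈ x, a i)‖ ^ 2
      = ‖X‖ ^ 2 + (Fintype.card α - b) / (b * (Fintype.card α - 1))
          * ((Fintype.card α : ℝ)⁻¹ * ∑ i, ‖a i‖ ^ 2
            - ‖(Fintype.card α : ℝ)⁻¹ • ∑ i, a i‖ ^ 2) := by
  have hN : (#(powersetCard b (univ : Finset α)) : ℝ) ≠ 0 := by
    rw [card_powersetCard, card_univ]
    exact_mod_cast (Nat.choose_pos hbn).ne'
  have hb0 : (b : ℝ) ≠ 0 := Nat.cast_ne_zero.2 (by omega)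
  have hn0 : (Fintype.card α : ℝ) ≠ 0 := Nat.cast_ne_zero.2 (by omega)
  have hn1 : (Fintype.card α : ℝ) - 1 ≠ 0 := by
    rw [sub_ne_zero]; exact_mod_cast (by omega : Fintype.card α ≠ 1)
  have : Nonempty α := Fintype.card_pos_iff.1 (by omega)
  set m := (Fintype.card α : ℝ)⁻¹ • ∑ i, a i with hm
  have hsum : ∑ i, a i = (Fintype.card α : ℝ) • m := by rw [hm, smul_inv_smul₀ hn0]
  have expand : ∀ x : Finset α, ‖X + (m - (b : ℝ)⁻¹ • ∑ i ∈ x, a i)‖ ^ 2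
      = ‖X + m‖ ^ 2 - 2 * (b : ℝ)⁻¹ * ⟪X + m, ∑ i ∈ x, a i⟫
        + (b : ℝ)⁻¹ ^ 2 * ‖∑ i ∈ x, a i‖ ^ 2 := by
    intro x
    rw [← add_sub_assoc, norm_sub_sq_real, real_inner_smul_right, norm_smul, mul_pow,
      Real.norm_of_nonneg (by positivity)]
    ring
  simp_rw [expand]
  rw [sum_add_distrib, sum_sub_distrib, sum_const, ← mul_sum, ← mul_sum, ← inner_sum,
    sum_powersetCard_univ_sum, sum_powersetCard_univ_norm_sum_sq hn, hsum, real_inner_smul_right,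
    real_inner_smul_right, norm_smul, Real.norm_natCast, norm_add_sq_real, inner_add_left,
    real_inner_self_eq_norm_sq]
  field_simp
  ring

end Sampling

section Expectation

variable {Ω : Type*} [Fintype Ω]

lemma expec_nonneg {F : Ω → ℝ} (h : ∀ ω, 0 ≤ F ω) : 0 ≤ expec F :=
  mul_nonneg (by positivity) (sum_nonneg fun ω _ => h ω)

lemma expec_mono {F G : Ω → ℝ} (h : ∀ ω, F ω ≤ G ω) : expec F ≤ expec G :=
  mul_le_mul_of_nonneg_left (sum_le_sum fun ω _ => h ω) (by positivity)

lemma expec_add (F G : Ω → ℝ) : expec (fun ω => F ω + G ω) = expec F + expec G := by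
  simp only [expec, sum_add_distrib, mul_add]

lemma expec_const_mul (c : ℝ) (F : Ω → ℝ) : expec (fun ω => c * F ω) = c * expec F := by
  simp only [expec, ← mul_sum]
  ring

lemma expec_eq_expec_expec_update {ι β : Type*} [Fintype ι] [DecidableEq ι] [Fintype β]
    [Nonempty β] (F : (ι → β) → ℝ) (k : ι) :
    expec F = expec (fun ω => expec (fun s => F (Function.update ω k s))) := by
  have resample : ∑ ω : ι → β, ∑ s : β, F (Function.update ω k s)
      = Fintype.card β * ∑ ω, F ω := by
    let e := Function.Involutive.toPerm
      (fun p : (ι → β) × β => (Function.update p.1 k p.2, p.1 k)) fun p => by simp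
    rw [← Fintype.sum_prod_type',
      Fintype.sum_equiv e (fun p => F (Function.update p.1 k p.2)) (fun p => F p.1) fun p => rfl,
      Fintype.sum_prod_type]
    simp [mul_sum]
  simp only [expec, ← mul_sum]
  rw [resample, inv_mul_cancel_left₀ (by positivity)]

end Expectation

lemma expec_batch {n b : ℕ} (F : Finset (Fin n) → ℝ) :
    expec (fun s : Batch n b => F s.1)
      = (#(powersetCard b (univ : Finset (Fin n))) : ℝ)⁻¹
          * ∑ x ∈ powersetCard b (univ : Finset (Fin n)), F x := by
  have hcard : Fintype.card (Batch n b) = #(powersetCard b (univ : Finset (Fin n))) :=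
    Fintype.card_of_subtype _ fun s => mem_powersetCard_univ
  have hsum : ∑ s : Batch n b, F s.1 = ∑ x ∈ powersetCard b (univ : Finset (Fin n)), F x :=
    (sum_subtype _ (fun s => mem_powersetCard_univ) F).symm
  rw [expec, hcard, hsum]

lemma gradient_const_mul_sum {F ι : Type*} [NormedAddCommGroup F] [InnerProductSpace ℝ F]
    [CompleteSpace F] [Fintype ι] {f : ι → F → ℝ} {w : F}
    (hf : ∀ i, DifferentiableAt ℝ (f i) w) (c : ℝ) :
    gradient (fun w => c * ∑ i, f i w) w = c • ∑ i, gradient (f i) w := by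
  have hf' : ∀ i ∈ (univ : Finset ι), DifferentiableAt ℝ (f i) w := fun i _ => hf i
  simp only [gradient]
  rw [fderiv_const_mul (DifferentiableAt.fun_sum hf'), fderiv_fun_sum hf', map_smul, map_sum]

-- `2 / (√(1 + K) + 1)` is the positive root of `K x² / 4 + x - 1`.
lemma sq_mul_le_one_sub_of_le_two_div {K x : ℝ} (hK : 0 ≤ K) (hx : 0 ≤ x)
    (h : x ≤ 2 / (√(1 + K) + 1)) : K / 4 * x ^ 2 ≤ 1 - x := by
  have hroot : √(1 + K) ^ 2 = 1 + K := Real.sq_sqrt (by linarith)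
  have hR : 1 ≤ √(1 + K) := Real.one_le_sqrt.2 (by linarith)
  rw [le_div_iff₀ (by positivity)] at h
  nlinarith [mul_le_mul_of_nonneg_left h (mul_nonneg (sub_nonneg.2 hR) hx)]

lemma sum_range_le_of_le_add {A B : ℕ → ℝ} {c : ℝ} {m : ℕ} (hc : 0 ≤ c) (hB : ∀ t, 0 ≤ B t)
    (h0 : A 0 ≤ 0) (hA : ∀ t < m, A (t + 1) ≤ A t + c * B t) :
    ∑ t ∈ range (m + 1), A t ≤ m * c * ∑ t ∈ range (m + 1), B t := by
  have partial_sum : ∀ t ≤ m, A t ≤ c * ∑ j ∈ range t, B j := by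
    intro t
    induction t with
    | zero => simpa using h0
    | succ t ih =>
      intro ht
      rw [sum_range_succ, mul_add]
      linarith [hA t ht, ih (by omega)]
  have monotone : ∀ t ≤ m, ∑ j ∈ range t, B j ≤ ∑ j ∈ range (m + 1), B j := fun t ht =>
    sum_le_sum_of_subset_of_nonneg (range_subset_range.2 (by omega)) fun j _ _ => hB j
  calc ∑ t ∈ range (m + 1), A t = ∑ t ∈ range m, A (t + 1) + A 0 := sum_range_succ' _ _
    _ ≤ ∑ _t ∈ range m, c * ∑ j ∈ range (m + 1), B j + 0 := by
      gcongr with t ht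
      exact (partial_sum (t + 1) (by simp at ht; omega)).trans
        (mul_le_mul_of_nonneg_left (monotone _ (by simp at ht; omega)) hc)
    _ = m * c * ∑ t ∈ range (m + 1), B t := by simp [mul_assoc]

lemma sub_div_mul_sub_one_nonneg {n b : ℕ} (hn : 1 ≤ n) (hbn : b ≤ n) :
    0 ≤ ((n : ℝ) - b) / (b * (n - 1)) := by
  have : (b : ℝ) ≤ n := by exact_mod_cast hbn
  have : (1 : ℝ) ≤ n := by exact_mod_cast hn
  exact div_nonneg (by linarith) (mul_nonneg (by positivity) (by linarith))

def sarahStep {E : Type*} [AddCommGroup E] [Module ℝ E] {n : ℕ} (g : Fin n → E → E) (η : ℝ)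
    (b : ℕ) (I : Finset (Fin n)) (p : E × E) : E × E :=
  (p.1 - η • p.2, (b : ℝ)⁻¹ • ∑ i ∈ I, (g i (p.1 - η • p.2) - g i p.1) + p.2)

lemma expec_sarahStep_error_le {E : Type*} [NormedAddCommGroup E] [InnerProductSpace ℝ E]
    {n b : ℕ} (hn : 2 ≤ n) (hb : 1 ≤ b) (hbn : b ≤ n) {g : Fin n → E → E} {L : ℝ}
    (hg : ∀ i w w', ‖g i w - g i w'‖ ≤ L * ‖w - w'‖) (η : ℝ) (p : E × E) :
    expec (fun s : Batch n b =>
        ‖(n : ℝ)⁻¹ • ∑ i, g i (sarahStep g η b s.1 p).1 - (sarahStep g η b s.1 p).2‖ ^ 2)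
      ≤ ‖(n : ℝ)⁻¹ • ∑ i, g i p.1 - p.2‖ ^ 2
        + (n - b) / (b * (n - 1)) * (L ^ 2 * η ^ 2) * ‖p.2‖ ^ 2 := by
  obtain ⟨w, v⟩ := p
  set δ : Fin n → E := fun i => g i (w - η • v) - g i w
  have increment : ∀ i, ‖δ i‖ ^ 2 ≤ L ^ 2 * η ^ 2 * ‖v‖ ^ 2 := by
    intro i
    have h := hg i (w - η • v) w
    rw [sub_sub_cancel_left, norm_neg, norm_smul, Real.norm_eq_abs] at h
    calc ‖δ i‖ ^ 2 ≤ (L * (|η| * ‖v‖)) ^ 2 := pow_le_pow_left₀ (norm_nonneg _) h 2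
      _ = L ^ 2 * η ^ 2 * ‖v‖ ^ 2 := by rw [mul_pow, mul_pow, sq_abs]; ring
  have mean_increment : (n : ℝ)⁻¹ * ∑ i, ‖δ i‖ ^ 2 ≤ L ^ 2 * η ^ 2 * ‖v‖ ^ 2 := by
    rw [inv_mul_le_iff₀ (by positivity)]
    calc ∑ i, ‖δ i‖ ^ 2 ≤ ∑ _i : Fin n, L ^ 2 * η ^ 2 * ‖v‖ ^ 2 :=
          sum_le_sum fun i _ => increment i
      _ = n * (L ^ 2 * η ^ 2 * ‖v‖ ^ 2) := by simp
  have centred : ∀ x : Finset (Fin n),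
      (n : ℝ)⁻¹ • ∑ i, g i (w - η • v) - ((b : ℝ)⁻¹ • ∑ i ∈ x, δ i + v)
        = ((n : ℝ)⁻¹ • ∑ i, g i w - v)
          + ((n : ℝ)⁻¹ • ∑ i, δ i - (b : ℝ)⁻¹ • ∑ i ∈ x, δ i) := by
    intro x
    simp only [δ, sum_sub_distrib, smul_sub]
    abel
  have variance := average_powersetCard_univ_norm_add_sub_sq (α := Fin n) (b := b)
    (by simpa using hn) hb (by simpa using hbn) ((n : ℝ)⁻¹ • ∑ i, g i w - v) δ
  simp only [Fintype.card_fin] at variance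
  have hκ := sub_div_mul_sub_one_nonneg (by omega) hbn
  refine (expec_batch (b := b) fun x =>
    ‖(n : ℝ)⁻¹ • ∑ i, g i (w - η • v) - ((b : ℝ)⁻¹ • ∑ i ∈ x, δ i + v)‖ ^ 2).trans_le ?_
  simp_rw [centred, variance, mul_assoc _ _ (‖v‖ ^ 2)]
  gcongr
  linarith [sq_nonneg ‖(n : ℝ)⁻¹ • ∑ i, δ i‖]

section Trajectory

variable {d n : ℕ} (f : Fin n → Vec d → ℝ) (w0 : Vec d) (η : ℝ) (b : ℕ)

def sarahError (I : ℕ → Finset (Fin n)) (t : ℕ) : ℝ :=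
  ‖(n : ℝ)⁻¹ • ∑ i, gradient (f i) (sarahState f w0 η b I t).1
    - (sarahState f w0 η b I t).2‖ ^ 2

lemma sarahError_zero (I : ℕ → Finset (Fin n)) : sarahError f w0 η b I 0 = 0 := by
  simp [sarahError, sarahState]

lemma sarahState_congr {I I' : ℕ → Finset (Fin n)} :
    ∀ {t : ℕ}, (∀ j ≤ t, I j = I' j) → sarahState f w0 η b I t = sarahState f w0 η b I' t
  | 0, _ => rfl
  | t + 1, h => by
    simp only [sarahState]
    rw [sarahState_congr fun j hj => h j (by omega), h (t + 1) le_rfl]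

lemma sarahState_pad_update {T t : ℕ} (ω : Fin T → Batch n b) (k : Fin T)
    (hk : (k : ℕ) = t + 1) (s : Batch n b) :
    sarahState f w0 η b (pad (Function.update ω k s)) (t + 1)
      = sarahStep (fun i => gradient (f i)) η b s.1 (sarahState f w0 η b (pad ω) t) := by
  have past : ∀ j ≤ t, pad (Function.update ω k s) j = pad ω j := by
    intro j hj
    simp only [pad]
    split_ifs with hjT
    · rw [Function.update_of_ne (Fin.ne_of_val_ne (by dsimp only; omega))]
    · rfl
  have now : pad (Function.update ω k s) (t + 1) = s.1 := by
    simp only [pad, ← hk, k.isLt, dif_pos, Fin.eta, Function.update_self]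
  show sarahStep _ η b (pad (Function.update ω k s) (t + 1)) _ = _
  rw [sarahState_congr f w0 η b past, now]

lemma expec_sarahError_succ_le (hn : 2 ≤ n) (hb : 1 ≤ b) (hbn : b ≤ n) {L : ℝ}
    (hsmooth : ∀ i (w w' : Vec d), ‖gradient (f i) w - gradient (f i) w'‖ ≤ L * ‖w - w'‖)
    {m t : ℕ} (ht : t < m) :
    expec (fun ω : Fin (m + 1) → Batch n b => sarahError f w0 η b (pad ω) (t + 1))
      ≤ expec (fun ω : Fin (m + 1) → Batch n b => sarahError f w0 η b (pad ω) t)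
        + (n - b) / (b * (n - 1)) * (L ^ 2 * η ^ 2)
          * expec (fun ω : Fin (m + 1) → Batch n b =>
              ‖(sarahState f w0 η b (pad ω) t).2‖ ^ 2) := by
  obtain ⟨x, -, hx⟩ :=
    exists_subset_card_eq (s := (univ : Finset (Fin n))) (by simpa using hbn)
  have : Nonempty (Batch n b) := ⟨⟨x, hx⟩⟩
  let k : Fin (m + 1) := ⟨t + 1, by omega⟩
  rw [expec_eq_expec_expec_update _ k, ← expec_const_mul, ← expec_add]
  refine expec_mono fun ω => ?_
  simp only [sarahError, sarahState_pad_update f w0 η b ω k rfl]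
  exact expec_sarahStep_error_le hn hb hbn hsmooth η _

lemma sum_expec_sarahError_le (hn : 2 ≤ n) (hb : 1 ≤ b) (hbn : b ≤ n) {L : ℝ}
    (hsmooth : ∀ i (w w' : Vec d), ‖gradient (f i) w - gradient (f i) w'‖ ≤ L * ‖w - w'‖)
    (m : ℕ) :
    ∑ t ∈ range (m + 1),
        expec (fun ω : Fin (m + 1) → Batch n b => sarahError f w0 η b (pad ω) t)
      ≤ m * ((n - b) / (b * (n - 1)) * (L ^ 2 * η ^ 2)) * ∑ t ∈ range (m + 1),
          expec (fun ω : Fin (m + 1) → Batch n b => ‖(sarahState f w0 η b (pad ω) t).2‖ ^ 2) := by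
  have hκ := sub_div_mul_sub_one_nonneg (by omega) hbn
  refine sum_range_le_of_le_add (by positivity) (fun t => expec_nonneg fun ω => sq_nonneg _)
    ?_ fun t ht => expec_sarahError_succ_le f w0 η b hn hb hbn hsmooth ht
  simp [sarahError_zero, expec]

end Trajectory

/-- With the SARAH learning-rate condition
`0 < η ≤ 2/(L(√(1 + (4m/b)((n−b)/(n−1))) + 1))`, the error terms in Lemma 1 are
nonpositive: `∑_{t=0}^m E‖∇P(w_t) − v_t‖² − (1 − Lη)∑_{t=0}^m E‖v_t‖² ≤ 0`. -/
theorem sarah_in_error_terms_nonpos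
    {d n : ℕ} (hn : 2 ≤ n)
    (f : Fin n → Vec d → ℝ) (L : ℝ) (hL : 0 < L)
    (hdiff : ∀ i, Differentiable ℝ (f i))
    (hsmooth : ∀ i (w w' : Vec d),
      ‖gradient (f i) w - gradient (f i) w'‖ ≤ L * ‖w - w'‖)
    (P : Vec d → ℝ) (hP : P = fun w => (n : ℝ)⁻¹ * ∑ i, f i w)
    (w0 : Vec d) (η : ℝ) (hη : 0 < η) (b m : ℕ) (hb : 1 ≤ b) (hbn : b ≤ n)
    (hη2 : η ≤ 2 / (L * (Real.sqrt (1 + 4 * (m : ℝ) / (b : ℝ)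
      * (((n : ℝ) - (b : ℝ)) / ((n : ℝ) - 1))) + 1))) :
    ∑ t ∈ Finset.range (m + 1),
        expec (fun ω : Fin (m + 1) → Batch n b =>
          ‖gradient P ((sarahState f w0 η b (pad ω) t).1)
            - (sarahState f w0 η b (pad ω) t).2‖ ^ 2)
      - (1 - L * η) * ∑ t ∈ Finset.range (m + 1),
          expec (fun ω : Fin (m + 1) → Batch n b =>
            ‖(sarahState f w0 η b (pad ω) t).2‖ ^ 2) ≤ 0 := by
  have hgradP : ∀ w, gradient P w = (n : ℝ)⁻¹ • ∑ i, gradient (f i) w := fun w => by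
    rw [hP, gradient_const_mul_sum fun i => (hdiff i).differentiableAt]
  set K : ℝ := 4 * (m : ℝ) / (b : ℝ) * (((n : ℝ) - (b : ℝ)) / ((n : ℝ) - 1))
  have hLη : L * η ≤ 2 / (√(1 + K) + 1) :=
    calc L * η ≤ L * (2 / (L * (√(1 + K) + 1))) := mul_le_mul_of_nonneg_left hη2 hL.le
      _ = 2 / (√(1 + K) + 1) := by field_simp
  have hK : 0 ≤ K := mul_nonneg (by positivity) (div_nonneg
    (sub_nonneg.2 (by exact_mod_cast hbn)) (sub_nonneg.2 (by exact_mod_cast (by omega : 1 ≤ n))))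
  have rate := sq_mul_le_one_sub_of_le_two_div hK (by positivity) hLη
  have hrate : K / 4 * (L * η) ^ 2 = m * (((n : ℝ) - b) / (b * (n - 1)) * (L ^ 2 * η ^ 2)) := by
    simp only [K, div_eq_mul_inv, mul_inv]
    ring
  have errors := sum_expec_sarahError_le f w0 η b hn hb hbn hsmooth m
  simp only [sarahError] at errors
  simp only [hgradP]
  have hB : 0 ≤ ∑ t ∈ range (m + 1),
      expec (fun ω : Fin (m + 1) → Batch n b => ‖(sarahState f w0 η b (pad ω) t).2‖ ^ 2) :=
    sum_nonneg fun t _ => expec_nonneg fun ω => sq_nonneg _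
  linarith [mul_le_mul_of_nonneg_right (hrate ▸ rate) hB]
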